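/- Let G₁, G₂ ≤ Aut(X*) be weakly branch groups and let φ : G₁ → G₂ be a saturated isomorphism. Then φ is induced by an automorphism of the tree: there exists f ∈ Aut(X*) such that φ(g) = f g f⁻¹ for all g ∈ G₁. -/

import Mathlib

/-!  Common setup: the group `Aut(X*)` of automorphisms of the rooted binary tree,
the Grigorchuk generators `a, b_ω, c_ω, d_ω`, and the subgroups `G_ω`, `L_ω`. -/

/-- Finite words over `X = {0,1}`: vertices of the rooted binary tree. -/
abbrev Word := List Bool

/-- `Aut(X*)`: bijections of the set of words which preserve word length
(hence fix the empty word) and preserve the prefix relation, as a subgroup of the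
permutation group of `Word`. -/
def TreeAut : Subgroup (Equiv.Perm Word) where
  carrier := {g | (∀ w : Word, (g w).length = w.length) ∧
      ∀ u v : Word, u <+: v ↔ g u <+: g v}
  one_mem' := ⟨fun _ => rfl, fun _ _ => Iff.rfl⟩
  mul_mem' := by
    rintro g h ⟨hg1, hg2⟩ ⟨hh1, hh2⟩
    refine ⟨fun w => ?_, fun u v => ?_⟩
    · simpa using (hg1 (h w)).trans (hh1 w)
    · simpa using (hh2 u v).trans (hg2 (h u) (h v))
  inv_mem' := by
    rintro g ⟨hg1, hg2⟩
    refine ⟨fun w => ?_, fun u v => ?_⟩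
    · have := hg1 (g⁻¹ w)
      rw [Equiv.Perm.inv_def, Equiv.apply_symm_apply] at this
      exact this.symm
    · have := (hg2 (g⁻¹ u) (g⁻¹ v)).symm
      simpa using this

/-- Application of a tree automorphism to a word. -/
def ap (g : ↥TreeAut) (w : Word) : Word := (g : Equiv.Perm Word) w

/-- The root permutation `a` (as a map): `a(0v) = 1v`, `a(1v) = 0v`. -/
def aFun : Word → Word
  | [] => []
  | x :: v => (!x) :: v

/-- The common recursive pattern of the maps `b_ω, c_ω, d_ω`: on `0v` act by the
identity if `ω 0 = k` and by `a` otherwise, on `1v` recurse with the shifted sequence.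
(`k = 2` gives `b`, `k = 1` gives `c`, `k = 0` gives `d`.) -/
def genFun (k : Fin 3) : (ℕ → Fin 3) → Word → Word
  | _, [] => []
  | ω, false :: v => false :: (if ω 0 = k then v else aFun v)
  | ω, true :: v => true :: genFun k (fun n => ω (n + 1)) v

lemma aFun_invol : Function.Involutive aFun := by
  intro w; cases w with
  | nil => rfl
  | cons x v => simp [aFun]

lemma aFun_length : ∀ w : Word, (aFun w).length = w.length := by
  intro w; cases w <;> simp [aFun]

lemma aFun_prefix : ∀ u v : Word, u <+: v → aFun u <+: aFun v := by
  intro u v h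
  cases u with
  | nil => simp [aFun]
  | cons x u' =>
    cases v with
    | nil => simp at h
    | cons y v' =>
      rw [List.cons_prefix_cons] at h
      obtain ⟨rfl, h2⟩ := h
      simpa [aFun, List.cons_prefix_cons] using h2

lemma genFun_length (k : Fin 3) : ∀ (w : Word) (ω : ℕ → Fin 3),
    (genFun k ω w).length = w.length
  | [], _ => rfl
  | false :: v, ω => by
    by_cases h : ω 0 = k <;> simp [genFun, h, aFun_length]
  | true :: v, ω => by
    simp [genFun, genFun_length k v]

lemma genFun_invol (k : Fin 3) : ∀ (w : Word) (ω : ℕ → Fin 3),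
    genFun k ω (genFun k ω w) = w
  | [], _ => rfl
  | false :: v, ω => by
    by_cases h : ω 0 = k <;> simp [genFun, h, aFun_invol v]
  | true :: v, ω => by
    simp [genFun, genFun_invol k v]

lemma genFun_prefix (k : Fin 3) : ∀ (u v : Word) (ω : ℕ → Fin 3),
    u <+: v → genFun k ω u <+: genFun k ω v
  | [], v, ω, _ => by simp [genFun]
  | x :: u', [], ω, h => by simp at h
  | x :: u', y :: v', ω, h => by
    rw [List.cons_prefix_cons] at h
    obtain ⟨rfl, h2⟩ := h
    cases x with
    | false =>
      by_cases h0 : ω 0 = k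
      · simpa [genFun, h0, List.cons_prefix_cons] using h2
      · simpa [genFun, h0, List.cons_prefix_cons] using aFun_prefix u' v' h2
    | true =>
      simpa [genFun, List.cons_prefix_cons] using genFun_prefix k u' v' _ h2

/-- Build an element of `Aut(X*)` from an involutive, length-preserving,
prefix-preserving map. -/
def mkAut (f : Word → Word) (hinv : Function.Involutive f)
    (hlen : ∀ w, (f w).length = w.length)
    (hpre : ∀ u v : Word, u <+: v → f u <+: f v) : ↥TreeAut :=
  ⟨hinv.toPerm, by
    refine ⟨fun w => ?_, fun u v => ⟨fun h => ?_, fun h => ?_⟩⟩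
    · simpa using hlen w
    · simpa using hpre u v h
    · have := hpre _ _ (by simpa using h)
      simpa [hinv u, hinv v] using this⟩

/-- The automorphism `a`. -/
def aAut : ↥TreeAut := mkAut aFun aFun_invol aFun_length aFun_prefix

/-- The automorphism `b_ω`. -/
def bAut (ω : ℕ → Fin 3) : ↥TreeAut :=
  mkAut (genFun 2 ω) (fun w => genFun_invol 2 w ω) (fun w => genFun_length 2 w ω)
    (fun u v h => genFun_prefix 2 u v ω h)

/-- The automorphism `c_ω`. -/
def cAut (ω : ℕ → Fin 3) : ↥TreeAut :=
  mkAut (genFun 1 ω) (fun w => genFun_invol 1 w ω) (fun w => genFun_length 1 w ω)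
    (fun u v h => genFun_prefix 1 u v ω h)

/-- The automorphism `d_ω`. -/
def dAut (ω : ℕ → Fin 3) : ↥TreeAut :=
  mkAut (genFun 0 ω) (fun w => genFun_invol 0 w ω) (fun w => genFun_length 0 w ω)
    (fun u v h => genFun_prefix 0 u v ω h)

/-- `G_ω = ⟨a, b_ω, c_ω, d_ω⟩`. -/
def Ggrp (ω : ℕ → Fin 3) : Subgroup ↥TreeAut :=
  Subgroup.closure {aAut, bAut ω, cAut ω, dAut ω}

/-- `L_ω = ⟨a b_ω, d_ω⟩`. -/
def Lgrp (ω : ℕ → Fin 3) : Subgroup ↥TreeAut :=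
  Subgroup.closure {aAut * bAut ω, dAut ω}

/-- The `n`-fold shift `σⁿω`. -/
def shift (n : ℕ) (ω : ℕ → Fin 3) : ℕ → Fin 3 := fun m => ω (m + n)

/-- `Ω_∞`: sequences in which each of `0, 1, 2` occurs infinitely often. -/
def OmegaInf : Set (ℕ → Fin 3) := {ω | ∀ k : Fin 3, ∀ N : ℕ, ∃ n, N ≤ n ∧ ω n = k}

/-- `g` fixes every word of length `n`. -/
def fixesLevel (g : ↥TreeAut) (n : ℕ) : Prop := ∀ w : Word, w.length = n → ap g w = w

/-- The subgroup of all tree automorphisms acting trivially outside the subtree `uX*`. -/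
def ristSubgroup (u : Word) : Subgroup ↥TreeAut where
  carrier := {g | ∀ w : Word, ¬ u <+: w → ap g w = w}
  one_mem' := by intro w _; rfl
  mul_mem' := by
    intro g h hg hh w hw
    have e1 : ap g w = w := hg w hw
    have e2 : ap h w = w := hh w hw
    simp only [ap] at e1 e2
    show (g : Equiv.Perm Word) ((h : Equiv.Perm Word) w) = w
    rw [e2, e1]
  inv_mem' := by
    intro g hg w hw
    have h1' : ap g w = w := hg w hw
    have h1 : (g : Equiv.Perm Word) w = w := h1'
    show ((g : Equiv.Perm Word))⁻¹ w = w
    conv_lhs => rw [← h1]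
    simp

/-- The subgroup of all tree automorphisms fixing every word of length `n`
(the `n`-th level stabilizer in `Aut(X*)`). -/
def levelStab (n : ℕ) : Subgroup ↥TreeAut where
  carrier := {g | fixesLevel g n}
  one_mem' := by intro w _; rfl
  mul_mem' := by
    intro g h hg hh w hw
    have e1 : ap g w = w := hg w hw
    have e2 : ap h w = w := hh w hw
    simp only [ap] at e1 e2
    show (g : Equiv.Perm Word) ((h : Equiv.Perm Word) w) = w
    rw [e2, e1]
  inv_mem' := by
    intro g hg w hw
    have h1' : ap g w = w := hg w hw
    have h1 : (g : Equiv.Perm Word) w = w := h1'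
    show ((g : Equiv.Perm Word))⁻¹ w = w
    conv_lhs => rw [← h1]
    simp

/-- The rigid level stabilizer `Rist_G(n)`: the subgroup generated by the rigid vertex
stabilizers `Rist_G(u) = G ⊓ ristSubgroup u` over all words `u` of length `n`. -/
def ristLevel (G : Subgroup ↥TreeAut) (n : ℕ) : Subgroup ↥TreeAut :=
  ⨆ u ∈ {u : Word | u.length = n}, G ⊓ ristSubgroup u

/-- `G` acts transitively on each level of the tree. -/
def LevelTransitive (G : Subgroup ↥TreeAut) : Prop :=
  ∀ u v : Word, u.length = v.length → ∃ g ∈ G, ap g u = v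

/-- A set of tree automorphisms acts level transitively on the subtree `vX*`. -/
def LevelTransitiveOn (S : Set ↥TreeAut) (v : Word) : Prop :=
  ∀ u₁ u₂ : Word, u₁.length = u₂.length → ∃ g ∈ S, ap g (v ++ u₁) = v ++ u₂

/-- `L_{n,ω}`: `L_{0,ω} = L_ω` and `L_{n,ω}` is generated by the squares of
elements of `L_{n-1,ω}`. -/
def Lsq (ω : ℕ → Fin 3) : ℕ → Subgroup ↥TreeAut
  | 0 => Lgrp ω
  | n + 1 => Subgroup.closure {x | ∃ y ∈ Lsq ω n, x = y * y}

/-- `g` is active at the word `v`: the section `g_v` acts nontrivially on the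
one-letter words. -/
def IsActive (g : ↥TreeAut) (v : Word) : Prop :=
  ap g (v ++ [false]) ≠ ap g v ++ [false]

open scoped Classical in
/-- `p(g)_n`: the number of words of length `n` at which `g` is active, mod 2
(words of length `n` are enumerated as `List.ofFn f` for `f : Fin n → Bool`). -/
noncomputable def pMap (g : ↥TreeAut) (n : ℕ) : ZMod 2 :=
  (((Finset.univ : Finset (Fin n → Bool)).filter
    (fun f => IsActive g (List.ofFn f))).card : ZMod 2)

/-- `G` is weakly branch: level transitive with all rigid vertex stabilizers
nontrivial. -/
def WeaklyBranch (G : Subgroup ↥TreeAut) : Prop :=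
  LevelTransitive G ∧ ∀ u : Word, G ⊓ ristSubgroup u ≠ ⊥

/-- An isomorphism `φ : G₁ → G₂` is saturated if there are subgroups `H n ≤ G₁` with
`H n ≤ St_{G₁}(n)`, `φ(H n) ≤ St_{G₂}(n)`, and for every word `v` of length `n` both
`H n` and `φ(H n)` act level transitively on the subtree `vX*`. -/
def Saturated (G₁ G₂ : Subgroup ↥TreeAut) (φ : ↥G₁ ≃* ↥G₂) : Prop :=
  ∃ H : ℕ → Subgroup ↥G₁,
    (∀ n, ∀ h ∈ H n, fixesLevel ((h : ↥G₁) : ↥TreeAut) n) ∧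
    (∀ n, ∀ h ∈ H n, fixesLevel ((φ h : ↥G₂) : ↥TreeAut) n) ∧
    (∀ n, ∀ v : Word, v.length = n →
      LevelTransitiveOn ((fun x : ↥G₁ => (x : ↥TreeAut)) '' (H n : Set ↥G₁)) v ∧
      LevelTransitiveOn ((fun x : ↥G₁ => ((φ x : ↥G₂) : ↥TreeAut)) '' (H n : Set ↥G₁)) v)

/-!
Call `c` linked to `v` if `c` lies on the level of `v` and `φ(Rist_{G₁}(v))` moves a vertex
below `c`. Every `v` is linked to some `c`, and the heart of the proof is that this `c` is unique.
Granting uniqueness, `v ↦ c` is `φ`-equivariant and preserves prefixes; it is bijective since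
uniqueness holds for `φ⁻¹` as well and `c` is linked to `v` under `φ⁻¹` whenever `v` is linked
to `c` under `φ`; so it is the required tree automorphism.

If `c ≠ c'` were both linked to `v`, the commuting subgroups `φ⁻¹(Rist_{G₂}(c))` and
`φ⁻¹(Rist_{G₂}(c'))` would both act below `v`. Both are normalized by the group `N` of elements
whose image fixes the level of `c`, which by saturation is level transitive on every subtree below
that level. Commutators `⁅r, h⁆` with `r` in a rigid stabilizer of `G₁` and `h ∈ N` produce, in
one subgroup, an element acting as a chosen `r ∈ Rist_{G₁}(γ0)` below `γ0`, and in the other,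
elements acting as any `s ∈ Rist_{G₁}(ν0)` below a deeper vertex `ν0`. Since these commute, either
`s ↦ s⁻¹` or `s ↦ h s h⁻¹` (for every `h ∈ N` with `h ν0 = ν1`) agrees with one fixed conjugation
below `ν0` or `ν1`; the first would make `Rist_{G₁}(ν0)` abelian, the second contradicts the
transitivity of `N`.
-/

lemma LevelTransitiveOn.mono {S T : Set ↥TreeAut} {v : Word} (h : LevelTransitiveOn S v)
    (hST : S ⊆ T) : LevelTransitiveOn T v := fun u₁ u₂ hl =>
  let ⟨g, hg, hgu⟩ := h u₁ u₂ hl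
  ⟨g, hST hg, hgu⟩

namespace TreeAut

open List Subgroup
open scoped commutatorElement

variable {x y z e r p q s t : ↥TreeAut} {u v w c : Word}

lemma ap_mul (x y : ↥TreeAut) (w : Word) : ap (x * y) w = ap x (ap y w) := rfl

@[simp] lemma ap_one (w : Word) : ap 1 w = w := rfl

lemma length_ap (x : ↥TreeAut) (w : Word) : (ap x w).length = w.length := x.2.1 w

lemma ap_prefix_ap_iff (x : ↥TreeAut) : ap x u <+: ap x v ↔ u <+: v := (x.2.2 u v).symm

lemma ap_prefix_ap (x : ↥TreeAut) (h : u <+: v) : ap x u <+: ap x v := (ap_prefix_ap_iff x).2 h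

lemma prefix_ap_of_ap_eq_self (hx : ap x u = u) (hw : u <+: w) : u <+: ap x w :=
  hx ▸ ap_prefix_ap x hw

lemma ap_injective (x : ↥TreeAut) : Function.Injective (ap x) :=
  (x : Equiv.Perm Word).injective

@[simp] lemma ap_inv_ap (x : ↥TreeAut) (w : Word) : ap x⁻¹ (ap x w) = w := by
  simp [ap]

@[simp] lemma ap_ap_inv (x : ↥TreeAut) (w : Word) : ap x (ap x⁻¹ w) = w := by
  simp [ap]

lemma ap_inv_eq_of_ap_eq (h : ap x u = w) : ap x⁻¹ w = u := by
  rw [← h, ap_inv_ap]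

lemma ap_conj (g x : ↥TreeAut) (w : Word) : ap (g * x * g⁻¹) (ap g w) = ap g (ap x w) := by
  simp [ap_mul]

lemma ext (h : ∀ w, ap x w = ap y w) : x = y :=
  Subtype.ext (Equiv.ext h)

lemma exists_ap_ne_of_ne_one (h : x ≠ 1) : ∃ w, ap x w ≠ w := by
  by_contra! hx
  exact h (ext hx)

lemma eq_of_prefix_of_prefix (hu : u <+: w) (hv : v <+: w) (hl : u.length = v.length) :
    u = v :=
  (prefix_of_prefix_length_le hu hv hl.le).eq_of_length hl

lemma exists_eq_append_singleton (h : u <+: v) (hl : v.length = u.length + 1) :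
    ∃ b, v = u ++ [b] := by
  obtain ⟨t, rfl⟩ := h
  match t, (by simpa using hl : t.length = 1) with
  | [b], _ => exact ⟨b, rfl⟩

lemma exists_prefix_length_eq (w : Word) {n : ℕ} (h : w.length ≤ n) :
    ∃ w', w <+: w' ∧ w'.length = n :=
  ⟨w ++ replicate (n - w.length) false, prefix_append _ _, by simp; omega⟩

lemma ap_eq_self_of_prefix (hv : ap x v = v) (huv : u <+: v) : ap x u = u :=
  eq_of_prefix_of_prefix (hv ▸ ap_prefix_ap x huv) huv (length_ap x u)

lemma ap_ne_self_of_prefix (h : ap x u ≠ u) (huv : u <+: v) : ap x v ≠ v :=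
  fun hv => h (ap_eq_self_of_prefix hv huv)

lemma ap_eq_of_ap_append_eq {u' s s' : Word} (h : ap x (u ++ s) = u' ++ s')
    (hl : u.length = u'.length) : ap x u = u' :=
  eq_of_prefix_of_prefix (h ▸ ap_prefix_ap x (prefix_append u s)) (prefix_append u' s')
    (by rw [length_ap, hl])

def EqOnCone (u : Word) (x y : ↥TreeAut) : Prop := ∀ w, u <+: w → ap x w = ap y w

namespace EqOnCone

lemma symm (h : EqOnCone u x y) : EqOnCone u y x := fun w hw => (h w hw).symm

lemma trans (h : EqOnCone u x y) (h' : EqOnCone u y z) : EqOnCone u x z :=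
  fun w hw => (h w hw).trans (h' w hw)

lemma mono (h : EqOnCone u x y) (huv : u <+: v) : EqOnCone v x y :=
  fun w hw => h w (huv.trans hw)

lemma inv (h : EqOnCone u x y) (hy : ap y u = u) : EqOnCone u x⁻¹ y⁻¹ := by
  have hy' : ap y⁻¹ u = u := ap_inv_eq_of_ap_eq hy
  intro w hw
  apply ap_inv_eq_of_ap_eq
  rw [h _ (prefix_ap_of_ap_eq_self hy' hw), ap_ap_inv]

lemma mul {x' y' : ↥TreeAut} (hx : EqOnCone u x x') (hy : EqOnCone u y y')
    (hy' : ap y' u = u) : EqOnCone u (x * y) (x' * y') := by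
  intro w hw
  rw [ap_mul, ap_mul, hy w hw, hx _ (prefix_ap_of_ap_eq_self hy' hw)]

lemma of_conj (g : ↥TreeAut) (h : EqOnCone (ap g u) (g * x * g⁻¹) (g * y * g⁻¹)) :
    EqOnCone u x y := by
  intro w hw
  apply ap_injective g
  rw [← ap_conj g x, ← ap_conj g y, h _ (ap_prefix_ap g hw)]

end EqOnCone

lemma ap_self_of_mem_ristSubgroup (hx : x ∈ ristSubgroup u) : ap x u = u := by
  by_contra hne
  have hnp : ¬ u <+: ap x u := fun h => hne (h.eq_of_length (length_ap x u).symm).symm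
  have := (ristSubgroup u).inv_mem hx _ hnp
  rw [ap_inv_ap] at this
  exact hne this.symm

lemma prefix_of_ap_ne (hx : x ∈ ristSubgroup u) (hw : ap x w ≠ w) : u <+: w := by
  by_contra h
  exact hw (hx w h)

lemma prefix_ap_of_mem_ristSubgroup (hx : x ∈ ristSubgroup u) (hw : u <+: w) :
    u <+: ap x w :=
  prefix_ap_of_ap_eq_self (ap_self_of_mem_ristSubgroup hx) hw

lemma ristSubgroup_anti (h : u <+: v) : ristSubgroup v ≤ ristSubgroup u :=
  fun _ hx w hw => hx w fun hc => hw (h.trans hc)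

lemma conj_mem_ristSubgroup (hx : x ∈ ristSubgroup u) (g : ↥TreeAut) :
    g * x * g⁻¹ ∈ ristSubgroup (ap g u) := by
  intro w hw
  have : ¬ u <+: ap g⁻¹ w := fun h => hw (by simpa using ap_prefix_ap g h)
  rw [ap_mul, ap_mul, hx _ this, ap_ap_inv]

lemma eqOnCone_one_of_mem_ristSubgroup (hx : x ∈ ristSubgroup u)
    (hl : u.length = v.length) (hne : u ≠ v) : EqOnCone v x 1 :=
  fun w hw => hx w fun hu => hne (eq_of_prefix_of_prefix hu hw hl)

lemma eq_of_eqOnCone (hx : x ∈ ristSubgroup u) (hy : y ∈ ristSubgroup u)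
    (h : EqOnCone u x y) : x = y := by
  refine ext fun w => ?_
  by_cases hw : u <+: w
  · exact h w hw
  · rw [hx w hw, hy w hw]

lemma eq_one_of_mem_ristSubgroup_of_mem_ristSubgroup {u' : Word} (hx : x ∈ ristSubgroup u)
    (hx' : x ∈ ristSubgroup u') (hl : u.length = u'.length) (hne : u ≠ u') : x = 1 :=
  eq_of_eqOnCone hx (one_mem _) (eqOnCone_one_of_mem_ristSubgroup hx' hl.symm hne.symm)

lemma commute_of_eqOnCone_one (hx : EqOnCone u x 1) (hy : y ∈ ristSubgroup u) :
    Commute x y := by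
  refine ext fun w => ?_
  by_cases hw : u <+: w
  · rw [ap_mul, ap_mul, hx w hw, hx _ (prefix_ap_of_mem_ristSubgroup hy hw), ap_one, ap_one]
  · have hxu : ap x u = u := hx u (prefix_refl u)
    have hxw : ¬ u <+: ap x w := fun h => hw ((ap_prefix_ap_iff x).1 (by rwa [hxu]))
    rw [ap_mul, ap_mul, hy w hw, hy _ hxw]

lemma commute_of_mem_ristSubgroup {u' : Word} (hx : x ∈ ristSubgroup u)
    (hy : y ∈ ristSubgroup u') (hl : u.length = u'.length) (hne : u ≠ u') : Commute x y :=
  commute_of_eqOnCone_one (eqOnCone_one_of_mem_ristSubgroup hx hl hne) hy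

/-- The element `z ∈ Rist(w)` moves some `w'` below `w`, so it also moves `x w'`, which must
then lie below both `w` and `x w`. -/
lemma eqOnCone_one_of_forall_commute
    (h : ∀ w, u <+: w → ∃ z ∈ ristSubgroup w, z ≠ 1 ∧ Commute x z) : EqOnCone u x 1 := by
  intro w hw
  obtain ⟨z, hz, hz1, hxz⟩ := h w hw
  obtain ⟨w', hw'⟩ := exists_ap_ne_of_ne_one hz1
  have hmoved : ap z (ap x w') ≠ ap x w' := by
    rw [← ap_mul, ← hxz.eq, ap_mul]
    exact fun hc => hw' (ap_injective x hc)
  exact eq_of_prefix_of_prefix (ap_prefix_ap x (prefix_of_ap_ne hz hw'))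
    (prefix_of_ap_ne hz hmoved) (length_ap x w)

lemma exists_not_commute {K : Subgroup ↥TreeAut} (hK : ∀ u, K ⊓ ristSubgroup u ≠ ⊥)
    (u : Word) : ∃ s ∈ K ⊓ ristSubgroup u, ∃ s' ∈ K ⊓ ristSubgroup u, ¬ Commute s s' := by
  obtain ⟨s, hs, hs1⟩ := (bot_or_exists_ne_one _).resolve_left (hK u)
  obtain ⟨α, hα⟩ := exists_ap_ne_of_ne_one hs1
  obtain ⟨s', hs', hs'1⟩ := (bot_or_exists_ne_one _).resolve_left (hK α)
  refine ⟨s, hs, s', ⟨hs'.1, ristSubgroup_anti (prefix_of_ap_ne hs.2 hα) hs'.2⟩, fun hc => ?_⟩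
  have hconj : s' ∈ ristSubgroup (ap s α) := by
    simpa [hc.eq] using conj_mem_ristSubgroup hs'.2 s
  exact hs'1 (eq_one_of_mem_ristSubgroup_of_mem_ristSubgroup hs'.2 hconj
    (length_ap s α).symm (Ne.symm hα))

lemma commutatorElement_eq_mul_conj (x y : ↥TreeAut) : ⁅x, y⁆ = x * (y * x⁻¹ * y⁻¹) := by
  rw [commutatorElement_def]
  group

lemma commutatorElement_mem_of_mem_normalizer {P : Subgroup ↥TreeAut}
    (hx : x ∈ normalizer (P : Set ↥TreeAut)) (hy : y ∈ P) : ⁅x, y⁆ ∈ P := by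
  rw [commutatorElement_def]
  exact P.mul_mem ((mem_normalizer_iff.1 hx y).1 hy) (P.inv_mem hy)

lemma commutatorElement_eqOnCone_left (hx : x ∈ ristSubgroup u) (hq : ap q u ≠ u) :
    EqOnCone u ⁅x, q⁆ x := by
  intro w hw
  rw [commutatorElement_eq_mul_conj, ap_mul, eqOnCone_one_of_mem_ristSubgroup
    (conj_mem_ristSubgroup (inv_mem hx) q) (length_ap q u) hq w hw, ap_one]

lemma commutatorElement_eqOnCone_right (hx : x ∈ ristSubgroup u) (hq : ap q u ≠ u) :
    EqOnCone (ap q u) ⁅x, q⁆ (q * x⁻¹ * q⁻¹) := by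
  intro w hw
  have hconj := conj_mem_ristSubgroup (inv_mem hx) q
  rw [commutatorElement_eq_mul_conj, ap_mul, eqOnCone_one_of_mem_ristSubgroup hx
    (length_ap q u).symm (Ne.symm hq) _ (prefix_ap_of_mem_ristSubgroup hconj hw), ap_one]

lemma commutatorElement_inv_eqOnCone_left (hx : x ∈ ristSubgroup u) (hq : ap q u ≠ u) :
    EqOnCone u ⁅x, q⁆⁻¹ x⁻¹ :=
  (commutatorElement_eqOnCone_left hx hq).inv (ap_self_of_mem_ristSubgroup hx)

lemma commutatorElement_inv_eqOnCone_right (hx : x ∈ ristSubgroup u) (hq : ap q u ≠ u) :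
    EqOnCone (ap q u) ⁅x, q⁆⁻¹ (q * x * q⁻¹) := by
  have h := (commutatorElement_eqOnCone_right hx hq).inv
    (ap_self_of_mem_ristSubgroup (conj_mem_ristSubgroup (inv_mem hx) q))
  rwa [show (q * x⁻¹ * q⁻¹)⁻¹ = q * x * q⁻¹ by group] at h

lemma ap_commutatorElement_of_not_prefix (hx : x ∈ ristSubgroup u) (hw : ¬ u <+: w)
    (hw' : ¬ ap q u <+: w) : ap ⁅x, q⁆ w = w := by
  rw [commutatorElement_eq_mul_conj, ap_mul,
    conj_mem_ristSubgroup (inv_mem hx) q w hw', hx w hw]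

lemma commutatorElement_mem_ristSubgroup (hx : x ∈ ristSubgroup u) (hu : v <+: u)
    (hq : v <+: ap q u) : ⁅x, q⁆ ∈ ristSubgroup v := by
  rw [commutatorElement_eq_mul_conj]
  exact mul_mem (ristSubgroup_anti hu hx)
    (ristSubgroup_anti hq (conj_mem_ristSubgroup (inv_mem hx) q))

def ActsBelow (P : Subgroup ↥TreeAut) (u : Word) : Prop :=
  ∃ p ∈ P, ∃ w, u <+: w ∧ ap p w ≠ w

namespace ActsBelow

variable {P Q : Subgroup ↥TreeAut}

lemma anti (h : ActsBelow P v) (huv : u <+: v) : ActsBelow P u :=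
  let ⟨p, hp, w, hw, hpw⟩ := h
  ⟨p, hp, w, huv.trans hw, hpw⟩

lemma conj (h : ActsBelow P u) (g : ↥TreeAut) (hg : ∀ p ∈ P, g * p * g⁻¹ ∈ Q) :
    ActsBelow Q (ap g u) := by
  obtain ⟨p, hp, w, hw, hpw⟩ := h
  refine ⟨g * p * g⁻¹, hg p hp, ap g w, ap_prefix_ap g hw, ?_⟩
  rw [ap_conj]
  exact fun hc => hpw (ap_injective g hc)

/-- Conjugating by `N` carries a vertex moved by `P` anywhere in `x₀X*`. -/
lemma of_prefix {N : Subgroup ↥TreeAut} {x₀ x : Word} (hN : N ≤ normalizer (P : Set ↥TreeAut))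
    (htr : LevelTransitiveOn N x₀) (h : ActsBelow P x₀) (hx : x₀ <+: x) : ActsBelow P x := by
  obtain ⟨p, hp, w, hw, hpw⟩ := h
  obtain ⟨w', hww', hw'⟩ := exists_prefix_length_eq w (le_max_left w.length x.length)
  obtain ⟨x', hxx', hx'⟩ := exists_prefix_length_eq x (le_max_right w.length x.length)
  obtain ⟨σ, rfl⟩ := hw.trans hww'
  obtain ⟨τ, rfl⟩ := hx.trans hxx'
  obtain ⟨g, hg, hgστ⟩ := htr σ τ (by simp at hw' hx'; omega)
  have hmoved : ActsBelow P (x₀ ++ σ) :=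
    ⟨p, hp, _, prefix_refl _, ap_ne_self_of_prefix hpw hww'⟩
  exact (hgστ ▸ hmoved.conj g fun p hp => (mem_normalizer_iff.1 (hN hg) p).1 hp).anti hxx'

end ActsBelow

section Rigidity

variable {K N P₀ P₁ : Subgroup ↥TreeAut}

lemma exists_mem_eqOnCone {γ : Word} (hKN : K ≤ normalizer (N : Set ↥TreeAut))
    (hNP : N ≤ normalizer (P₁ : Set ↥TreeAut)) (htr : LevelTransitiveOn N γ)
    (hq : q ∈ P₁) (hqγ : ap q γ ≠ γ) (hrK : r ∈ K) (hr : r ∈ ristSubgroup (γ ++ [false])) :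
    ∃ e ∈ P₁, EqOnCone (γ ++ [false]) e r := by
  obtain ⟨h, hN, hh⟩ := htr [false] [true] rfl
  have hζ : ⁅r, h⁆ ∈ ristSubgroup γ :=
    commutatorElement_mem_ristSubgroup hr (prefix_append _ _) (hh ▸ prefix_append _ _)
  refine ⟨⁅⁅r, h⁆, q⁆, commutatorElement_mem_of_mem_normalizer
    (hNP (commutatorElement_mem_of_mem_normalizer (hKN hrK) hN)) hq, ?_⟩
  exact ((commutatorElement_eqOnCone_left hζ hqγ).mono (prefix_append _ _)).trans
    (commutatorElement_eqOnCone_left hr (by simp [hh]))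

lemma eqOnCone_conj_of_commute {F : ↥TreeAut} (hc : Commute e F) (her : EqOnCone c e r)
    (hr : r ∈ ristSubgroup c) (hFs : EqOnCone u F s) (hs : s ∈ ristSubgroup u) (hcu : c <+: u) :
    EqOnCone (ap r u) F (r * s * r⁻¹) := by
  intro w hw
  have hu : u <+: ap r⁻¹ w := by simpa using ap_prefix_ap r⁻¹ hw
  have hcw : c <+: w :=
    (by simpa [ap_self_of_mem_ristSubgroup hr] using ap_prefix_ap r hcu : c <+: ap r u).trans hw
  calc ap F w = ap (e * F * e⁻¹) w := by rw [hc.eq, mul_inv_cancel_right]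
    _ = ap e (ap F (ap r⁻¹ w)) := by
      rw [ap_mul, ap_mul, her.inv (ap_self_of_mem_ristSubgroup hr) w hcw]
    _ = ap (r * s * r⁻¹) w := by
      rw [hFs _ hu, her _ (hcu.trans (prefix_ap_of_mem_ristSubgroup hs hu)), ap_mul, ap_mul]

lemma eqOnCone_commutatorElement_commutatorElement {ν : Word} {h : ↥TreeAut}
    (hKN : K ≤ normalizer (N : Set ↥TreeAut)) (hNP : N ≤ normalizer (P₀ : Set ↥TreeAut))
    (hcomm : ∀ p ∈ P₀, ∀ q ∈ P₁, Commute p q) (he : e ∈ P₁) (her : EqOnCone c e r)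
    (hr : r ∈ ristSubgroup c) (hcν : c <+: ν) (hp : p ∈ P₀) (hpν : ap p ν ≠ ν)
    (hs : s ∈ K ⊓ ristSubgroup (ν ++ [false])) (hN : h ∈ N)
    (hh : ap h (ν ++ [false]) = ν ++ [true]) :
    EqOnCone (ap r (ν ++ [false])) ⁅⁅s, h⁆, p⁆ (r * s * r⁻¹) := by
  have hζ : ⁅s, h⁆ ∈ ristSubgroup ν :=
    commutatorElement_mem_ristSubgroup hs.2 (prefix_append _ _) (hh ▸ prefix_append _ _)
  have hF : ⁅⁅s, h⁆, p⁆ ∈ P₀ := commutatorElement_mem_of_mem_normalizer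
    (hNP (commutatorElement_mem_of_mem_normalizer (hKN hs.1) hN)) hp
  refine eqOnCone_conj_of_commute (hcomm _ hF e he).symm her hr ?_ hs.2
    (hcν.trans (prefix_append _ _))
  exact ((commutatorElement_eqOnCone_left hζ hpν).mono (prefix_append _ _)).trans
    (commutatorElement_eqOnCone_left hs.2 (by simp [hh]))

/-- Since `r` moves `ν`, the subtree `(r ν0)X*` lies outside `νX*`. There `⁅⁅s, h⁆, p⁆` acts as
`r s r⁻¹`, nontrivially for `s ≠ 1`; this forces `(r ν0)X*` into `(p ν)X*`, where the same element
acts as `p ⁅s, h⁆⁻¹ p⁻¹`. -/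
lemma exists_eqOnCone_commutatorElement_inv {ν : Word} (hK : ∀ u, K ⊓ ristSubgroup u ≠ ⊥)
    (hKN : K ≤ normalizer (N : Set ↥TreeAut)) (hNP : N ≤ normalizer (P₀ : Set ↥TreeAut))
    (hcomm : ∀ p ∈ P₀, ∀ q ∈ P₁, Commute p q) (htr : LevelTransitiveOn N ν)
    (he : e ∈ P₁) (her : EqOnCone c e r) (hr : r ∈ ristSubgroup c) (hcν : c <+: ν)
    (hrν : ap r ν ≠ ν) (hp : p ∈ P₀) (hpν : ap p ν ≠ ν) :
    ∃ b, ∀ s ∈ K ⊓ ristSubgroup (ν ++ [false]), ∀ h ∈ N, ap h (ν ++ [false]) = ν ++ [true] →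
      EqOnCone (ν ++ [b]) ⁅s, h⁆⁻¹ ((p⁻¹ * r) * s * (p⁻¹ * r)⁻¹) := by
  have key := fun {s h} => eqOnCone_commutatorElement_commutatorElement (s := s) (h := h)
    hKN hNP hcomm he her hr hcν hp hpν
  have hlen : (ap r (ν ++ [false])).length = ν.length + 1 := by simp [length_ap]
  have hprefix : ap p ν <+: ap r (ν ++ [false]) := by
    by_contra hnot
    obtain ⟨s, hs, hs1⟩ := (bot_or_exists_ne_one _).resolve_left (hK (ν ++ [false]))
    obtain ⟨h, hN, hh⟩ := htr [false] [true] rfl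
    refine hs1 (eq_of_eqOnCone hs.2 (one_mem _) (EqOnCone.of_conj r ?_))
    intro w hw
    rw [mul_one, mul_inv_cancel, ← key hs hN hh w hw]
    refine ap_commutatorElement_of_not_prefix (commutatorElement_mem_ristSubgroup hs.2
      (prefix_append _ _) (hh ▸ prefix_append _ _)) (fun hνw => hrν ?_) (fun hpw => hnot ?_)
    · exact eq_of_prefix_of_prefix (ap_prefix_ap r (prefix_append _ _))
        (prefix_of_prefix_length_le hνw hw (by omega)) (length_ap r ν)
    · exact prefix_of_prefix_length_le hpw hw (by rw [length_ap]; omega)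
  obtain ⟨b, hb⟩ : ∃ b, ap (p⁻¹ * r) (ν ++ [false]) = ν ++ [b] :=
    exists_eq_append_singleton (by simpa [ap_mul] using ap_prefix_ap p⁻¹ hprefix)
      (by rw [ap_mul, length_ap, hlen])
  refine ⟨b, fun s hs h hN hh => EqOnCone.of_conj p ?_⟩
  have hpb : ap p (ν ++ [b]) = ap r (ν ++ [false]) := by rw [← hb, ap_mul, ap_ap_inv]
  rw [hpb, show p * ((p⁻¹ * r) * s * (p⁻¹ * r)⁻¹) * p⁻¹ = r * s * r⁻¹ by group]
  exact ((commutatorElement_eqOnCone_right (commutatorElement_mem_ristSubgroup hs.2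
    (prefix_append _ _) (hh ▸ prefix_append _ _)) hpν).mono hprefix).symm.trans
    (key hs hN hh)

lemma not_forall_eqOnCone_inv_conj (hK : ∀ u, K ⊓ ristSubgroup u ≠ ⊥) (u : Word)
    (t : ↥TreeAut) : ¬ ∀ s ∈ K ⊓ ristSubgroup u, EqOnCone u s⁻¹ (t * s * t⁻¹) := by
  intro h
  obtain ⟨s₁, hs₁, s₂, hs₂, hnc⟩ := exists_not_commute hK u
  have hfix : ap (t * s₂ * t⁻¹) u = u :=
    (h s₂ hs₂ u (prefix_refl u)).symm.trans (ap_self_of_mem_ristSubgroup (inv_mem hs₂.2))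
  have hanti : EqOnCone u (s₂⁻¹ * s₁⁻¹) (s₁⁻¹ * s₂⁻¹) := by
    have h12 := h _ (mul_mem hs₁ hs₂)
    rw [mul_inv_rev, show t * (s₁ * s₂) * t⁻¹ = (t * s₁ * t⁻¹) * (t * s₂ * t⁻¹) by group] at h12
    exact h12.trans ((h s₁ hs₁).mul (h s₂ hs₂) hfix).symm
  exact hnc (Commute.inv_inv_iff.mp (eq_of_eqOnCone
    (mul_mem (inv_mem hs₂.2) (inv_mem hs₁.2)) (mul_mem (inv_mem hs₁.2) (inv_mem hs₂.2))
    hanti).symm)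

/-- Pick `s ∈ Rist(ν00)` moving `ν00ρ`, and `g₁, g₂ ∈ N` sending `ν01ρ` and `ν00ρ` to `ν10ρ`:
then `g₁ s g₁⁻¹` fixes `ν10ρ` while `g₂ s g₂⁻¹` does not. -/
lemma not_forall_eqOnCone_conj {ν : Word} (hK : ∀ u, K ⊓ ristSubgroup u ≠ ⊥)
    (htr : LevelTransitiveOn N ν) (t : ↥TreeAut) :
    ¬ ∀ s ∈ K ⊓ ristSubgroup (ν ++ [false]), ∀ g ∈ N, ap g (ν ++ [false]) = ν ++ [true] →
      EqOnCone (ν ++ [true]) (g * s * g⁻¹) (t * s * t⁻¹) := by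
  intro h
  obtain ⟨s, hs, hs1⟩ := (bot_or_exists_ne_one _).resolve_left (hK (ν ++ [false, false]))
  obtain ⟨m, hm⟩ := exists_ap_ne_of_ne_one hs1
  obtain ⟨ρ, rfl⟩ := prefix_of_ap_ne hs.2 hm
  obtain ⟨g₁, hg₁, hg₁ρ⟩ := htr (false :: true :: ρ) (true :: false :: ρ) rfl
  obtain ⟨g₂, hg₂, hg₂ρ⟩ := htr (false :: false :: ρ) (true :: false :: ρ) rfl
  have hadm : ∀ {g : ↥TreeAut} {ρ₁ ρ₂ : Word}, ap g (ν ++ false :: ρ₁) = ν ++ true :: ρ₂ →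
      ap g (ν ++ [false]) = ν ++ [true] :=
    fun hg => ap_eq_of_ap_append_eq (by simpa using hg) (by simp)
  have hs0 : s ∈ K ⊓ ristSubgroup (ν ++ [false]) :=
    ⟨hs.1, ristSubgroup_anti (prefix_append_right_inj ν |>.2 (by simp)) hs.2⟩
  have key := ((h s hs0 g₁ hg₁ (hadm hg₁ρ)).trans (h s hs0 g₂ hg₂ (hadm hg₂ρ)).symm)
    (ν ++ true :: false :: ρ) (by simp)
  rw [← hg₁ρ, ap_conj, hs.2 _ (by simp), hg₁ρ, ← hg₂ρ, ap_conj] at key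
  exact hm (by simpa using (ap_injective g₂ key).symm)

theorem not_actsBelow_of_actsBelow {L₀ : ℕ} {x₀ : Word}
    (hK : ∀ u, K ⊓ ristSubgroup u ≠ ⊥) (hKN : K ≤ normalizer (N : Set ↥TreeAut))
    (hN₀ : N ≤ normalizer (P₀ : Set ↥TreeAut)) (hN₁ : N ≤ normalizer (P₁ : Set ↥TreeAut))
    (htr : ∀ v, L₀ ≤ v.length → LevelTransitiveOn N v)
    (hcomm : ∀ p ∈ P₀, ∀ q ∈ P₁, Commute p q) (hx₀ : L₀ ≤ x₀.length)
    (h₀ : ActsBelow P₀ x₀) : ¬ ActsBelow P₁ x₀ := by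
  rintro ⟨q, hq, γ, hx₀γ, hqγ⟩
  have hγ : L₀ ≤ γ.length := hx₀.trans hx₀γ.length_le
  obtain ⟨r, hr, hr1⟩ := (bot_or_exists_ne_one _).resolve_left (hK (γ ++ [false]))
  obtain ⟨e, he, her⟩ := exists_mem_eqOnCone hKN hN₁ (htr γ hγ) hq hqγ hr.1 hr.2
  obtain ⟨μ, hμ⟩ := exists_ap_ne_of_ne_one hr1
  have hγμ := prefix_of_ap_ne hr.2 hμ
  obtain ⟨p, hp, ν, hμν, hpν⟩ :=
    h₀.of_prefix hN₀ (htr x₀ hx₀) (hx₀γ.trans ((prefix_append _ _).trans hγμ))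
  have hν : L₀ ≤ ν.length := hγ.trans (by simpa using ((prefix_append _ _).trans
    (hγμ.trans hμν)).length_le)
  obtain ⟨b, hb⟩ := exists_eqOnCone_commutatorElement_inv hK hKN hN₀ hcomm (htr ν hν) he her
    hr.2 (hγμ.trans hμν) (ap_ne_self_of_prefix hμ hμν) hp hpν
  cases b
  · obtain ⟨g, hg, hgν⟩ := htr ν hν [false] [true] rfl
    exact not_forall_eqOnCone_inv_conj hK _ (p⁻¹ * r) fun s hs =>
      (commutatorElement_inv_eqOnCone_left hs.2 (by simp [hgν])).symm.trans (hb s hs g hg hgν)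
  · refine not_forall_eqOnCone_conj hK (htr ν hν) (p⁻¹ * r) fun s hs g hg hgν => ?_
    have hζ := commutatorElement_inv_eqOnCone_right hs.2 (q := g) (by simp [hgν])
    rw [hgν] at hζ
    exact hζ.symm.trans (hb s hs g hg hgν)

end Rigidity

section LevelStabilizer

variable {L : ℕ}

lemma ap_eq_self_of_mem_levelStab (hx : x ∈ levelStab L) (hw : w.length ≤ L) : ap x w = w :=
  let ⟨w', hww', hw'⟩ := exists_prefix_length_eq w hw
  ap_eq_self_of_prefix (hx w' hw') hww'

lemma levelStab_anti {L' : ℕ} (h : L ≤ L') : levelStab L' ≤ levelStab L :=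
  fun _ hx _ hw => ap_eq_self_of_mem_levelStab hx (hw ▸ h)

lemma levelStab_normal (L : ℕ) : (levelStab L).Normal := by
  refine ⟨fun x hx g w hw => ?_⟩
  rw [ap_mul, ap_mul, hx _ (by rw [length_ap, hw]), ap_ap_inv]

lemma levelStab_le_normalizer (hc : c.length ≤ L) :
    levelStab L ≤ normalizer (ristSubgroup c : Set ↥TreeAut) := by
  intro x hx
  rw [mem_normalizer_iff]
  refine fun y => ⟨fun hy => ?_, fun hy => ?_⟩
  · simpa [ap_eq_self_of_mem_levelStab hx hc] using conj_mem_ristSubgroup hy x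
  · have h := conj_mem_ristSubgroup hy x⁻¹
    rwa [ap_eq_self_of_mem_levelStab (inv_mem hx) hc,
      show x⁻¹ * (x * y * x⁻¹) * x⁻¹⁻¹ = y by group] at h

end LevelStabilizer

section Isomorphism

variable {A B : Subgroup ↥TreeAut}

/-- `ψ(A ⊓ S)`, as a subgroup of `Aut(X*)`. -/
def imageSubgroup (ψ : A ≃* B) (S : Subgroup ↥TreeAut) : Subgroup ↥TreeAut :=
  (S.comap A.subtype).map (B.subtype.comp ψ.toMonoidHom)

variable {ψ : A ≃* B} {S T : Subgroup ↥TreeAut}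

lemma mem_imageSubgroup :
    x ∈ imageSubgroup ψ S ↔ ∃ a : A, (a : ↥TreeAut) ∈ S ∧ (ψ a : ↥TreeAut) = x :=
  Iff.rfl

lemma imageSubgroup_mono (h : S ≤ T) : imageSubgroup ψ S ≤ imageSubgroup ψ T :=
  map_mono (comap_mono h)

lemma imageSubgroup_le_normalizer (h : S ≤ normalizer (T : Set ↥TreeAut)) :
    imageSubgroup ψ S ≤ normalizer (imageSubgroup ψ T : Set ↥TreeAut) :=
  (imageSubgroup_mono h).trans ((map_mono (le_normalizer_comap _)).trans (le_normalizer_map _))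

lemma le_normalizer_imageSubgroup (hS : S.Normal) :
    B ≤ normalizer (imageSubgroup ψ S : Set ↥TreeAut) := fun b hb =>
  imageSubgroup_le_normalizer (by rw [normalizer_eq_top_iff.2 hS])
    (mem_imageSubgroup.2 ⟨ψ.symm ⟨b, hb⟩, mem_top _, by simp⟩)

lemma commute_coe_map {a a' : A} (h : Commute (a : ↥TreeAut) (a' : ↥TreeAut)) :
    Commute (ψ a : ↥TreeAut) (ψ a' : ↥TreeAut) :=
  ((show Commute a a' from Subtype.ext h.eq).map ψ).map B.subtype

def Linked (ψ : A ≃* B) (v c : Word) : Prop :=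
  v.length = c.length ∧ ActsBelow (imageSubgroup ψ (ristSubgroup v)) c

lemma exists_linked (hA : ∀ u, A ⊓ ristSubgroup u ≠ ⊥) (v : Word) : ∃ c, Linked ψ v c := by
  obtain ⟨a, ha, ha1⟩ := (bot_or_exists_ne_one _).resolve_left (hA v)
  have hψa : (ψ ⟨a, ha.1⟩ : ↥TreeAut) ≠ 1 := by simpa using ha1
  obtain ⟨w, hw⟩ := exists_ap_ne_of_ne_one hψa
  obtain ⟨w', hww', hw'⟩ := exists_prefix_length_eq w (le_max_left w.length v.length)
  refine ⟨w'.take v.length, by simp; omega, _, mem_imageSubgroup.2 ⟨_, ha.2, rfl⟩, w',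
    take_prefix _ _, ap_ne_self_of_prefix hw hww'⟩

namespace Linked

lemma take (h : Linked ψ v c) (huv : u <+: v) : Linked ψ u (c.take u.length) := by
  obtain ⟨p, hp, w, hcw, hw⟩ := h.2
  exact ⟨by simp [← h.1, huv.length_le], p, imageSubgroup_mono (ristSubgroup_anti huv) hp, w,
    (take_prefix _ _).trans hcw, hw⟩

lemma map (h : Linked ψ v c) (a : A) : Linked ψ (ap a v) (ap (ψ a) c) := by
  refine ⟨by simp [length_ap, h.1], h.2.conj _ fun p hp => ?_⟩
  obtain ⟨a', ha', rfl⟩ := mem_imageSubgroup.1 hp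
  exact mem_imageSubgroup.2 ⟨a * a' * a⁻¹, by simpa using conj_mem_ristSubgroup ha' a, by simp⟩

/-- If `ψ⁻¹(B ⊓ Rist(c))` fixed the subtree `vX*`, it would commute with `A ⊓ Rist(v)`, so
`ψ(A ⊓ Rist(v))` would commute with every `B ⊓ Rist(w)`, `c <+: w`, and could not act below `c`. -/
lemma symm (hB : ∀ u, B ⊓ ristSubgroup u ≠ ⊥) (h : Linked ψ v c) : Linked ψ.symm c v := by
  refine ⟨h.1.symm, ?_⟩
  by_contra hnot
  obtain ⟨p, hp, w, hcw, hw⟩ := h.2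
  obtain ⟨a, ha, rfl⟩ := mem_imageSubgroup.1 hp
  refine hw (eqOnCone_one_of_forall_commute (fun w' hcw' => ?_) w hcw)
  obtain ⟨y, hy, hy1⟩ := (bot_or_exists_ne_one _).resolve_left (hB w')
  have hfix : EqOnCone v (ψ.symm ⟨y, hy.1⟩) 1 := fun w'' hw'' => by_contra fun hm =>
    hnot ⟨_, mem_imageSubgroup.2 ⟨⟨y, hy.1⟩, ristSubgroup_anti hcw' hy.2, rfl⟩, w'', hw'', hm⟩
  refine ⟨y, hy.2, hy1, Commute.symm ?_⟩
  simpa using commute_coe_map (ψ := ψ) (commute_of_eqOnCone_one hfix ha)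

lemma right_unique (hA : ∀ u, A ⊓ ristSubgroup u ≠ ⊥) (hB : ∀ u, B ⊓ ristSubgroup u ≠ ⊥)
    (hψ : ∀ v : Word, LevelTransitiveOn (imageSubgroup ψ.symm (levelStab v.length)) v)
    {c' : Word} (h : Linked ψ v c) (h' : Linked ψ v c') : c = c' := by
  by_contra hne
  have hl : c.length = c'.length := h.1.symm.trans h'.1
  refine not_actsBelow_of_actsBelow hA (le_normalizer_imageSubgroup (levelStab_normal _))
    (imageSubgroup_le_normalizer (levelStab_le_normalizer le_rfl))
    (imageSubgroup_le_normalizer (levelStab_le_normalizer hl.ge))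
    (fun w hw => (hψ w).mono (imageSubgroup_mono (levelStab_anti hw))) ?_ h.1.ge
    (h.symm hB).2 (h'.symm hB).2
  intro p hp q hq
  obtain ⟨b, hb, rfl⟩ := mem_imageSubgroup.1 hp
  obtain ⟨b', hb', rfl⟩ := mem_imageSubgroup.1 hq
  exact commute_coe_map (commute_of_mem_ristSubgroup hb hb' hl hne)

end Linked

lemma exists_ap_eq_of_bijective {F : Word → Word} (hF : Function.Bijective F)
    (hlen : ∀ w, (F w).length = w.length) (hmono : ∀ u v, u <+: v → F u <+: F v) :
    ∃ f : ↥TreeAut, ∀ w, ap f w = F w := by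
  refine ⟨⟨Equiv.ofBijective F hF, hlen, fun u v => ⟨hmono u v, fun h => ?_⟩⟩, fun _ => rfl⟩
  have hu : u.length ≤ v.length := by simpa [hlen] using h.length_le
  have : F (v.take u.length) = F u :=
    eq_of_prefix_of_prefix (hmono _ _ (take_prefix _ _)) h (by simp [hlen]; omega)
  exact hF.1 this ▸ take_prefix _ _

theorem exists_eq_conj (hA : ∀ u, A ⊓ ristSubgroup u ≠ ⊥) (hB : ∀ u, B ⊓ ristSubgroup u ≠ ⊥)
    (hψ : ∀ v : Word, LevelTransitiveOn (imageSubgroup ψ.symm (levelStab v.length)) v)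
    (hψ' : ∀ v : Word, LevelTransitiveOn (imageSubgroup ψ (levelStab v.length)) v) :
    ∃ f : ↥TreeAut, ∀ a : A, (ψ a : ↥TreeAut) = f * a * f⁻¹ := by
  choose F hF using exists_linked (ψ := ψ) hA
  have unique : ∀ {v c}, Linked ψ v c → F v = c := fun h => (hF _).right_unique hA hB hψ h
  have hbij : Function.Bijective F :=
    ⟨fun v v' hvv' => Linked.right_unique (ψ := ψ.symm) hB hA hψ' ((hF v).symm hB)
        (hvv' ▸ (hF v').symm hB),
      fun c => (exists_linked (ψ := ψ.symm) hB c).imp fun v hv => unique (hv.symm hA)⟩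
  obtain ⟨f, hf⟩ := exists_ap_eq_of_bijective hbij (fun v => (hF v).1.symm)
    fun u v huv => unique ((hF v).take huv) ▸ take_prefix _ _
  refine ⟨f, fun a => ext fun w => ?_⟩
  obtain ⟨v, rfl⟩ := hbij.2 w
  rw [ap_mul, ap_mul, ← hf, ap_inv_ap, hf, hf]
  exact (unique ((hF v).map a)).symm

end Isomorphism

end TreeAut

/-- a saturated isomorphism between weakly branch subgroups of `Aut(X*)`
is induced by an automorphism of the tree. -/
theorem statement14 (G₁ G₂ : Subgroup ↥TreeAut) (h1 : WeaklyBranch G₁)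
    (h2 : WeaklyBranch G₂) (φ : ↥G₁ ≃* ↥G₂) (hφ : Saturated G₁ G₂ φ) :
    ∃ f : ↥TreeAut, ∀ g : ↥G₁, ((φ g : ↥G₂) : ↥TreeAut) = f * (g : ↥TreeAut) * f⁻¹ := by
  obtain ⟨H, hH₁, hH₂, htr⟩ := hφ
  refine TreeAut.exists_eq_conj h1.2 h2.2 (fun v => (htr _ v rfl).1.mono ?_)
    (fun v => (htr _ v rfl).2.mono ?_)
  · rintro _ ⟨h, hh, rfl⟩
    exact TreeAut.mem_imageSubgroup.2 ⟨φ h, hH₂ _ h hh, by simp⟩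
  · rintro _ ⟨h, hh, rfl⟩
    exact TreeAut.mem_imageSubgroup.2 ⟨h, hH₁ _ h hh, rfl⟩
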